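/- Let X be uniform on [0,1]³ and m(x) = (x₁−0.5)(x₂−0.5)+x₃. For t = [a₁,a₂]×[b₁,b₂]×[c₁,c₂] split at coordinate 1 and position c ∈ (a₁,a₂), the impurity decrease equals (c−a₁)(a₂−c)(b₁+b₂−1)²/16, and its supremum over c equals (a₂−a₁)²(b₁+b₂−1)²/64, attained at c = (a₁+a₂)/2. -/

import Mathlib

open MeasureTheory ProbabilityTheory

/-- The uniform distribution on the unit cube `[0,1]³`. -/
noncomputable def unifCube : Measure (Fin 3 → ℝ) :=
  volume.restrict (Set.univ.pi fun _ => Set.Icc (0:ℝ) 1)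

/-- The regression function `m(x) = (x₁ − 0.5)(x₂ − 0.5) + x₃`. -/
noncomputable def mfun (x : Fin 3 → ℝ) : ℝ := (x 0 - 0.5) * (x 1 - 0.5) + x 2

/-- The cell `[a₁,a₂] × [b₁,b₂] × [c₁,c₂]`. -/
def cell3 (a₁ a₂ b₁ b₂ c₁ c₂ : ℝ) : Set (Fin 3 → ℝ) :=
  {x | x 0 ∈ Set.Icc a₁ a₂ ∧ x 1 ∈ Set.Icc b₁ b₂ ∧ x 2 ∈ Set.Icc c₁ c₂}

/-- Conditional mean `E[m(X) | X ∈ A]` for `X` uniform on the unit cube. -/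
noncomputable def condMean3 (A : Set (Fin 3 → ℝ)) : ℝ := ∫ x, mfun x ∂(unifCube[|A])

/-- Impurity decrease `S(t;{t₁,t₂}) = P(t₁|t)P(t₂|t)(μ(t₁)−μ(t₂))²` for the split of `t`
at coordinate `j` and position `c`: `t₁ = {x ∈ t : x_j ≤ c}`, `t₂ = t \ t₁`. -/
noncomputable def splitScore (t : Set (Fin 3 → ℝ)) (j : Fin 3) (c : ℝ) : ℝ :=
  ((unifCube[|t]) {x ∈ t | x j ≤ c}).toReal *
    ((unifCube[|t]) (t \ {x ∈ t | x j ≤ c})).toReal *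
    (condMean3 {x ∈ t | x j ≤ c} - condMean3 (t \ {x ∈ t | x j ≤ c})) ^ 2


section Aux
open Set

lemma int1 (l u : ℝ) (h : l ≤ u) : ∫ x in Icc l u, (x - 1/2) = (u - l) * ((l + u)/2 - 1/2) := by
  rw [integral_Icc_eq_integral_Ioc, ← intervalIntegral.integral_of_le h,
    intervalIntegral.integral_sub intervalIntegral.intervalIntegrable_id intervalIntegrable_const,
    integral_id, intervalIntegral.integral_const]
  simp; ring

lemma int2 (l u : ℝ) (h : l ≤ u) : ∫ x in Icc l u, (x : ℝ) = (u - l) * ((l + u)/2) := by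
  rw [integral_Icc_eq_integral_Ioc, ← intervalIntegral.integral_of_le h,
    integral_id]; ring

lemma int0 (l u : ℝ) (h : l ≤ u) : ∫ _x in Icc l u, (1:ℝ) = u - l := by
  simp [Real.volume_Icc, ENNReal.toReal_ofReal (sub_nonneg.2 h), h]

/-- closed box -/
noncomputable def box3 (p q r s u v : ℝ) : Set (Fin 3 → ℝ) :=
  Set.univ.pi ![Icc p q, Icc r s, Icc u v]

lemma measurableSet_box3 (p q r s u v : ℝ) : MeasurableSet (box3 p q r s u v) :=
  MeasurableSet.univ_pi fun i => by fin_cases i <;> exact measurableSet_Icc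

lemma volume_box3 (p q r s u v : ℝ) :
    volume (box3 p q r s u v) =
      ENNReal.ofReal (q - p) * ENNReal.ofReal (s - r) * ENNReal.ofReal (v - u) := by
  rw [box3, volume_pi_pi, Fin.prod_univ_three]
  simp [Real.volume_Icc]

lemma indicator_prod_eq (s : Fin 3 → Set ℝ) (g : Fin 3 → ℝ → ℝ) :
    (Set.univ.pi s).indicator (fun x : Fin 3 → ℝ => ∏ i, g i (x i)) =
      fun x => ∏ i, (s i).indicator (g i) (x i) := by
  funext x
  by_cases hx : x ∈ Set.univ.pi s
  · rw [Set.indicator_of_mem hx]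
    exact Finset.prod_congr rfl fun i _ =>
      (Set.indicator_of_mem (hx i (Set.mem_univ i)) _).symm
  · rw [Set.indicator_of_notMem hx]
    rw [Set.mem_univ_pi] at hx
    push_neg at hx
    obtain ⟨i, hi⟩ := hx
    exact (Finset.prod_eq_zero (Finset.mem_univ i)
      (by rw [Set.indicator_of_notMem hi])).symm

lemma integrable_ind_prod (s : Fin 3 → Set ℝ) (g : Fin 3 → ℝ → ℝ)
    (h : ∀ i, Integrable ((s i).indicator (g i))) :
    Integrable (fun x : Fin 3 → ℝ => ∏ i, (s i).indicator (g i) (x i)) :=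
  Integrable.fin_nat_prod (𝕜 := ℝ) h

lemma integral_ind_prod (s : Fin 3 → Set ℝ) (g : Fin 3 → ℝ → ℝ) :
    ∫ x : Fin 3 → ℝ, ∏ i, (s i).indicator (g i) (x i) =
      ∏ i, ∫ x, (s i).indicator (g i) x :=
  integral_fin_nat_prod_eq_prod (𝕜 := ℝ) _

lemma integral_mfun_box (p q r s u v : ℝ) (hpq : p ≤ q) (hrs : r ≤ s) (huv : u ≤ v) :
    ∫ x in box3 p q r s u v, mfun x =
      ((q-p)*((p+q)/2 - 1/2)) * ((s-r)*((r+s)/2 - 1/2)) * (v-u)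
      + (q-p)*(s-r)*((v-u)*((u+v)/2)) := by
  have key : ∀ (l u : ℝ) (f : ℝ → ℝ), Continuous f → Integrable ((Icc l u).indicator f) :=
    fun l u f hf => (integrable_indicator_iff measurableSet_Icc).2 hf.integrableOn_Icc
  have hig : ∀ i : Fin 3, Integrable
      ((![Icc p q, Icc r s, Icc u v] i).indicator
        (![fun x => x - 1/2, fun x => x - 1/2, fun _ => (1:ℝ)] i)) := by
    intro i
    fin_cases i
    · exact key p q (fun x => x - 1/2) (by fun_prop)
    · exact key r s (fun x => x - 1/2) (by fun_prop)
    · exact key u v (fun _ => (1:ℝ)) continuous_const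
  have hih : ∀ i : Fin 3, Integrable
      ((![Icc p q, Icc r s, Icc u v] i).indicator
        (![fun _ => (1:ℝ), fun _ => (1:ℝ), fun x => x] i)) := by
    intro i
    fin_cases i
    · exact key p q (fun _ => (1:ℝ)) continuous_const
    · exact key r s (fun _ => (1:ℝ)) continuous_const
    · exact key u v (fun x => x) continuous_id
  have hm : ∀ x : Fin 3 → ℝ, mfun x =
      (∏ i, ![fun x => x - 1/2, fun x => x - 1/2, fun _ => (1:ℝ)] i (x i)) +
        (∏ i, ![fun _ => (1:ℝ), fun _ => (1:ℝ), fun x => x] i (x i)) := by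
    intro x
    simp [mfun, Fin.prod_univ_three]
    norm_num
  have heq : (box3 p q r s u v).indicator mfun =
      (fun x : Fin 3 → ℝ => ∏ i, (![Icc p q, Icc r s, Icc u v] i).indicator
        (![fun x => x - 1/2, fun x => x - 1/2, fun _ => (1:ℝ)] i) (x i)) +
      (fun x : Fin 3 → ℝ => ∏ i, (![Icc p q, Icc r s, Icc u v] i).indicator
        (![fun _ => (1:ℝ), fun _ => (1:ℝ), fun x => x] i) (x i)) := by
    rw [← indicator_prod_eq, ← indicator_prod_eq]
    funext x
    by_cases hx : x ∈ (Set.univ.pi ![Icc p q, Icc r s, Icc u v] : Set (Fin 3 → ℝ))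
    · have hx' : x ∈ box3 p q r s u v := hx
      simp only [Pi.add_apply, Set.indicator_of_mem hx, Set.indicator_of_mem hx']
      exact hm x
    · have hx' : x ∉ box3 p q r s u v := hx
      simp only [Pi.add_apply, Set.indicator_of_notMem hx, Set.indicator_of_notMem hx']
      ring
  rw [← integral_indicator (measurableSet_box3 p q r s u v), heq]
  simp only [Pi.add_apply]
  rw [volume_pi, integral_add (Integrable.fin_nat_prod (𝕜 := ℝ) hig) (Integrable.fin_nat_prod (𝕜 := ℝ) hih),
    integral_fin_nat_prod_eq_prod (𝕜 := ℝ), integral_fin_nat_prod_eq_prod (𝕜 := ℝ),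
    Fin.prod_univ_three, Fin.prod_univ_three]
  simp only [Matrix.cons_val_zero, Matrix.cons_val_one, Matrix.head_cons,
    Matrix.cons_val_two, Matrix.tail_cons]
  rw [integral_indicator measurableSet_Icc, integral_indicator measurableSet_Icc,
    integral_indicator measurableSet_Icc, integral_indicator measurableSet_Icc,
    integral_indicator measurableSet_Icc, integral_indicator measurableSet_Icc,
    int1 _ _ hpq, int1 _ _ hrs, int0 _ _ huv, int0 _ _ hpq, int0 _ _ hrs, int2 _ _ huv]

lemma box3_subset_cube {p q r s u v : ℝ} (hp : 0 ≤ p) (hq : q ≤ 1) (hr : 0 ≤ r) (hs : s ≤ 1)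
    (hu : 0 ≤ u) (hv : v ≤ 1) :
    box3 p q r s u v ⊆ Set.univ.pi fun _ => Set.Icc (0:ℝ) 1 := by
  refine Set.pi_mono fun i _ => ?_
  fin_cases i <;> exact Icc_subset_Icc (by linarith) (by linarith)

lemma unifCube_box3 {p q r s u v : ℝ} (hp : 0 ≤ p) (hq : q ≤ 1) (hr : 0 ≤ r) (hs : s ≤ 1)
    (hu : 0 ≤ u) (hv : v ≤ 1) :
    unifCube (box3 p q r s u v) =
      ENNReal.ofReal (q - p) * ENNReal.ofReal (s - r) * ENNReal.ofReal (v - u) := by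
  rw [unifCube, Measure.restrict_apply (measurableSet_box3 p q r s u v),
    Set.inter_eq_self_of_subset_left (box3_subset_cube hp hq hr hs hu hv), volume_box3]

lemma unifCube_restrict_box3 {p q r s u v : ℝ} (hp : 0 ≤ p) (hq : q ≤ 1) (hr : 0 ≤ r)
    (hs : s ≤ 1) (hu : 0 ≤ u) (hv : v ≤ 1) :
    unifCube.restrict (box3 p q r s u v) = volume.restrict (box3 p q r s u v) := by
  rw [unifCube, Measure.restrict_restrict (measurableSet_box3 p q r s u v),
    Set.inter_eq_self_of_subset_left (box3_subset_cube hp hq hr hs hu hv)]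

lemma condMean_box3 {p q r s u v : ℝ} (hp : 0 ≤ p) (hpq : p < q) (hq : q ≤ 1)
    (hr : 0 ≤ r) (hrs : r < s) (hs : s ≤ 1) (hu : 0 ≤ u) (huv : u < v) (hv : v ≤ 1) :
    condMean3 (box3 p q r s u v) = ((p+q)/2 - 1/2) * ((r+s)/2 - 1/2) + (u+v)/2 := by
  rw [condMean3, ProbabilityTheory.cond, integral_smul_measure,
    unifCube_restrict_box3 hp hq hr hs hu hv, unifCube_box3 hp hq hr hs hu hv,
    integral_mfun_box p q r s u v hpq.le hrs.le huv.le]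
  have h1 : (0:ℝ) < q - p := by linarith
  have h2 : (0:ℝ) < s - r := by linarith
  have h3 : (0:ℝ) < v - u := by linarith
  rw [← ENNReal.ofReal_mul h1.le, ← ENNReal.ofReal_mul (by positivity),
    ← ENNReal.ofReal_inv_of_pos (by positivity), ENNReal.toReal_ofReal (by positivity),
    smul_eq_mul]
  field_simp

noncomputable def box3I (p q r s u v : ℝ) : Set (Fin 3 → ℝ) :=
  Set.univ.pi ![Ioc p q, Icc r s, Icc u v]

lemma measurableSet_box3I (p q r s u v : ℝ) : MeasurableSet (box3I p q r s u v) :=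
  MeasurableSet.univ_pi fun i => by fin_cases i <;> first
    | exact measurableSet_Ioc | exact measurableSet_Icc

lemma box3I_subset (p q r s u v : ℝ) : box3I p q r s u v ⊆ box3 p q r s u v := by
  refine Set.pi_mono fun i _ => ?_
  fin_cases i
  · exact Ioc_subset_Icc_self
  · exact subset_rfl
  · exact subset_rfl

lemma box3I_ae_eq (p q r s u v : ℝ) : box3I p q r s u v =ᵐ[volume] box3 p q r s u v := by
  have hplane : volume {x : Fin 3 → ℝ | x 0 = p} = 0 := by
    rw [MeasureTheory.volume_pi]
    exact MeasureTheory.Measure.pi_hyperplane (fun _ : Fin 3 => (volume : Measure ℝ)) 0 p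
  rw [Filter.eventuallyEq_set]
  have h1 : {x : Fin 3 → ℝ | ¬ (x ∈ box3I p q r s u v ↔ x ∈ box3 p q r s u v)} ⊆
      {x : Fin 3 → ℝ | x 0 = p} := by
    intro x hx
    simp only [Set.mem_setOf_eq] at hx ⊢
    by_contra hne
    apply hx
    constructor
    · exact fun h => box3I_subset p q r s u v h
    · intro h
      intro i _
      have h0 := h 0 (Set.mem_univ 0)
      fin_cases i
      · simp only [Matrix.cons_val_zero] at h0 ⊢
        exact ⟨lt_of_le_of_ne h0.1 (Ne.symm hne), h0.2⟩
      · exact h 1 (Set.mem_univ 1)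
      · exact h 2 (Set.mem_univ 2)
  have := measure_mono_null h1 hplane
  exact (MeasureTheory.ae_iff).2 this

lemma unifCube_box3I {p q r s u v : ℝ} (hp : 0 ≤ p) (hq : q ≤ 1) (hr : 0 ≤ r) (hs : s ≤ 1)
    (hu : 0 ≤ u) (hv : v ≤ 1) :
    unifCube (box3I p q r s u v) =
      ENNReal.ofReal (q - p) * ENNReal.ofReal (s - r) * ENNReal.ofReal (v - u) := by
  rw [unifCube, Measure.restrict_apply (measurableSet_box3I p q r s u v),
    Set.inter_eq_self_of_subset_left
      ((box3I_subset p q r s u v).trans (box3_subset_cube hp hq hr hs hu hv)),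
    measure_congr (box3I_ae_eq p q r s u v), volume_box3]

lemma cond_box3I {p q r s u v : ℝ} (hp : 0 ≤ p) (hq : q ≤ 1) (hr : 0 ≤ r) (hs : s ≤ 1)
    (hu : 0 ≤ u) (hv : v ≤ 1) :
    unifCube[|box3I p q r s u v] = unifCube[|box3 p q r s u v] := by
  rw [ProbabilityTheory.cond, ProbabilityTheory.cond,
    unifCube_box3I hp hq hr hs hu hv, unifCube_box3 hp hq hr hs hu hv]
  congr 1
  rw [unifCube, Measure.restrict_restrict (measurableSet_box3I p q r s u v),
    Set.inter_eq_self_of_subset_left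
      ((box3I_subset p q r s u v).trans (box3_subset_cube hp hq hr hs hu hv)),
    Measure.restrict_restrict (measurableSet_box3 p q r s u v),
    Set.inter_eq_self_of_subset_left (box3_subset_cube hp hq hr hs hu hv),
    Measure.restrict_congr_set (box3I_ae_eq p q r s u v)]

lemma cell3_eq_box3 (a₁ a₂ b₁ b₂ c₁ c₂ : ℝ) :
    cell3 a₁ a₂ b₁ b₂ c₁ c₂ = box3 a₁ a₂ b₁ b₂ c₁ c₂ := by
  ext x
  simp only [cell3, box3, Set.mem_setOf_eq, Set.mem_univ_pi, Fin.forall_fin_succ,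
    Matrix.cons_val_zero, Matrix.cons_val_one, Matrix.head_cons, Fin.succ_zero_eq_one]
  constructor
  · rintro ⟨h1, h2, h3⟩
    refine ⟨h1, h2, ?_, fun i => i.elim0⟩
    exact h3
  · rintro ⟨h1, h2, h3, -⟩
    exact ⟨h1, h2, h3⟩

lemma t1_eq (a₁ a₂ b₁ b₂ c₁ c₂ c : ℝ) (h : c ≤ a₂) :
    {x ∈ cell3 a₁ a₂ b₁ b₂ c₁ c₂ | x 0 ≤ c} = box3 a₁ c b₁ b₂ c₁ c₂ := by
  rw [← cell3_eq_box3]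
  ext x
  simp only [cell3, Set.mem_setOf_eq, Set.mem_Icc]
  constructor
  · rintro ⟨⟨⟨h1, h2⟩, h3⟩, h4⟩
    exact ⟨⟨h1, h4⟩, h3⟩
  · rintro ⟨⟨h1, h2⟩, h3⟩
    exact ⟨⟨⟨h1, h2.trans h⟩, h3⟩, h2⟩

lemma t2_eq (a₁ a₂ b₁ b₂ c₁ c₂ c : ℝ) (h : a₁ ≤ c) :
    cell3 a₁ a₂ b₁ b₂ c₁ c₂ \ {x ∈ cell3 a₁ a₂ b₁ b₂ c₁ c₂ | x 0 ≤ c} =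
      box3I c a₂ b₁ b₂ c₁ c₂ := by
  ext x
  simp only [cell3, box3I, Set.mem_diff, Set.mem_setOf_eq, Set.mem_univ_pi, Fin.forall_fin_succ,
    Matrix.cons_val_zero, Matrix.cons_val_one, Matrix.head_cons, Fin.succ_zero_eq_one,
    Set.mem_Icc, Set.mem_Ioc, not_and, not_le]
  constructor
  · rintro ⟨⟨⟨h1, h2⟩, h3⟩, h4⟩
    exact ⟨⟨h4 ⟨⟨h1, h2⟩, h3⟩, h2⟩, h3.1, h3.2, fun i => i.elim0⟩
  · rintro ⟨⟨h1, h2⟩, h3, h4, -⟩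
    exact ⟨⟨⟨h.trans h1.le, h2⟩, h3, h4⟩, fun _ => h1⟩

lemma score_formula (a₁ a₂ b₁ b₂ c₁ c₂ : ℝ)
    (ha0 : 0 ≤ a₁) (ha : a₁ < a₂) (ha1 : a₂ ≤ 1)
    (hb0 : 0 ≤ b₁) (hb : b₁ < b₂) (hb1 : b₂ ≤ 1)
    (hc0 : 0 ≤ c₁) (hc : c₁ < c₂) (hc1 : c₂ ≤ 1) (c : ℝ) (hmem : c ∈ Set.Ioo a₁ a₂) :
    splitScore (cell3 a₁ a₂ b₁ b₂ c₁ c₂) 0 c =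
      (c - a₁) * (a₂ - c) * (b₁ + b₂ - 1) ^ 2 / 16 := by
  obtain ⟨hca, hca2⟩ := hmem
  have h0c : (0:ℝ) ≤ c := ha0.trans hca.le
  have hcle1 : c ≤ 1 := hca2.le.trans ha1
  rw [splitScore, t2_eq _ _ _ _ _ _ _ hca.le, t1_eq _ _ _ _ _ _ _ hca2.le, cell3_eq_box3]
  have hm2 : condMean3 (box3I c a₂ b₁ b₂ c₁ c₂) = condMean3 (box3 c a₂ b₁ b₂ c₁ c₂) := by
    rw [condMean3, condMean3, cond_box3I h0c ha1 hb0 hb1 hc0 hc1]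
  rw [ProbabilityTheory.cond_apply (measurableSet_box3 a₁ a₂ b₁ b₂ c₁ c₂),
    ProbabilityTheory.cond_apply (measurableSet_box3 a₁ a₂ b₁ b₂ c₁ c₂)]
  have hi1 : box3 a₁ a₂ b₁ b₂ c₁ c₂ ∩ box3 a₁ c b₁ b₂ c₁ c₂ = box3 a₁ c b₁ b₂ c₁ c₂ := by
    refine Set.inter_eq_self_of_subset_right (Set.pi_mono fun i _ => ?_)
    fin_cases i
    · exact Set.Icc_subset_Icc le_rfl hca2.le
    · exact subset_rfl
    · exact subset_rfl
  have hi2 : box3 a₁ a₂ b₁ b₂ c₁ c₂ ∩ box3I c a₂ b₁ b₂ c₁ c₂ = box3I c a₂ b₁ b₂ c₁ c₂ := by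
    refine Set.inter_eq_self_of_subset_right (Set.pi_mono fun i _ => ?_)
    fin_cases i
    · exact fun x hx => ⟨hca.le.trans hx.1.le, hx.2⟩
    · exact subset_rfl
    · exact subset_rfl
  rw [hi1, hi2, hm2,
    unifCube_box3 ha0 ha1 hb0 hb1 hc0 hc1,
    unifCube_box3 ha0 hcle1 hb0 hb1 hc0 hc1,
    unifCube_box3I h0c ha1 hb0 hb1 hc0 hc1,
    condMean_box3 ha0 hca hcle1 hb0 hb hb1 hc0 hc hc1,
    condMean_box3 h0c hca2 ha1 hb0 hb hb1 hc0 hc hc1]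
  have comb : ∀ x y z : ℝ, 0 ≤ x → 0 ≤ y →
      ENNReal.ofReal x * ENNReal.ofReal y * ENNReal.ofReal z =
        ENNReal.ofReal (x * y * z) := by
    intro x y z hx hy
    rw [← ENNReal.ofReal_mul hx, ← ENNReal.ofReal_mul (mul_nonneg hx hy)]
  have frac : ∀ V W : ℝ, 0 < V → 0 ≤ W →
      ((ENNReal.ofReal V)⁻¹ * ENNReal.ofReal W).toReal = W / V := by
    intro V W hV hW
    rw [← ENNReal.ofReal_inv_of_pos hV, ← ENNReal.ofReal_mul (by positivity),
      ENNReal.toReal_ofReal (by positivity), inv_mul_eq_div]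
  rw [comb _ _ _ (by linarith) (by linarith), comb _ _ _ (by linarith) (by linarith),
    comb _ _ _ (by linarith) (by linarith),
    frac _ _ (mul_pos (mul_pos (by linarith) (by linarith)) (by linarith))
      (mul_nonneg (mul_nonneg (by linarith) (by linarith)) (by linarith)),
    frac _ _ (mul_pos (mul_pos (by linarith) (by linarith)) (by linarith))
      (mul_nonneg (mul_nonneg (by linarith) (by linarith)) (by linarith))]
  have hV : (a₂ - a₁) ≠ 0 := by linarith
  have hB : (b₂ - b₁) ≠ 0 := by linarith
  have hC : (c₂ - c₁) ≠ 0 := by linarith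
  field_simp
  ring

end Aux

/-- splitting `t = [a₁,a₂]×[b₁,b₂]×[c₁,c₂]` at coordinate 1 and `c ∈ (a₁,a₂)`
gives impurity decrease `(c−a₁)(a₂−c)(b₁+b₂−1)²/16`, with supremum
`(a₂−a₁)²(b₁+b₂−1)²/64` attained at the midpoint `(a₁+a₂)/2`. -/
theorem stmt11 (a₁ a₂ b₁ b₂ c₁ c₂ : ℝ)
    (ha0 : 0 ≤ a₁) (ha : a₁ < a₂) (ha1 : a₂ ≤ 1)
    (hb0 : 0 ≤ b₁) (hb : b₁ < b₂) (hb1 : b₂ ≤ 1)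
    (hc0 : 0 ≤ c₁) (hc : c₁ < c₂) (hc1 : c₂ ≤ 1) :
    (∀ c ∈ Set.Ioo a₁ a₂,
        splitScore (cell3 a₁ a₂ b₁ b₂ c₁ c₂) 0 c =
          (c - a₁) * (a₂ - c) * (b₁ + b₂ - 1) ^ 2 / 16) ∧
      splitScore (cell3 a₁ a₂ b₁ b₂ c₁ c₂) 0 ((a₁ + a₂) / 2) =
        (a₂ - a₁) ^ 2 * (b₁ + b₂ - 1) ^ 2 / 64 ∧
      ∀ c ∈ Set.Ioo a₁ a₂,
        splitScore (cell3 a₁ a₂ b₁ b₂ c₁ c₂) 0 c ≤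
          (a₂ - a₁) ^ 2 * (b₁ + b₂ - 1) ^ 2 / 64 := by
  refine ⟨fun c hcc => score_formula a₁ a₂ b₁ b₂ c₁ c₂ ha0 ha ha1 hb0 hb hb1 hc0 hc hc1 c hcc,
    ?_, fun c hcc => ?_⟩
  · rw [score_formula a₁ a₂ b₁ b₂ c₁ c₂ ha0 ha ha1 hb0 hb hb1 hc0 hc hc1 ((a₁ + a₂) / 2)
      ⟨by linarith, by linarith⟩]
    ring
  · rw [score_formula a₁ a₂ b₁ b₂ c₁ c₂ ha0 ha ha1 hb0 hb hb1 hc0 hc hc1 c hcc]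
    nlinarith [sq_nonneg ((a₁ + a₂ - 2*c) * (b₁ + b₂ - 1)), hcc.1, hcc.2]
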